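/- arXiv:2108.01134 — 3 statements merged into one kernel-verified Lean document; each statement's English description precedes it below -/
import Mathlib

section
/- A collective choice rule f is advantage-standard rationalizable if and only if f satisfies weak IIA and orderability. -/
/-- A profile assigns to each voter a transitive and complete preference relation. -/
structure Profile (V X : Type*) where
  rel : V → X → X → Prop
  total : ∀ i x y, rel i x y ∨ rel i y x
  trans : ∀ i x y z, rel i x y → rel i y z → rel i x z

/-- A collective choice rule maps profiles to binary relations on candidates. -/
abbrev CCR (V X : Type*) := Profile V X → X → X → Prop

/-- Strict part of a relation. -/
def strictPref {X : Type*} (R : X → X → Prop) (x y : X) : Prop := R x y ∧ ¬ R y x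

/-- The restriction of a profile to the pair {x,y}. -/
def Profile.restrict {V X : Type*} (R : Profile V X) (x y : X) : V → X → X → Prop :=
  fun i a b => (a = x ∨ a = y) ∧ (b = x ∨ b = y) ∧ R.rel i a b

/-- The preprofile obtained by removing the pairs ⟨x,y⟩ and ⟨y,x⟩ from every voter's relation. -/
def Profile.remove {V X : Type*} (R : Profile V X) (x y : X) : V → X → X → Prop :=
  fun i a b => R.rel i a b ∧ ¬ ((a = x ∧ b = y) ∨ (a = y ∧ b = x))

/-- Majority margin of x over y in a preprofile. -/
noncomputable def marginOf {V X : Type*} (p : V → X → X → Prop) (x y : X) : ℤ :=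
  (Nat.card {i : V // strictPref (p i) x y} : ℤ) -
    (Nat.card {i : V // strictPref (p i) y x} : ℤ)
/-- A totally ordered group structure on G. -/
structure TOGroupStr (G : Type) where
  mul : G → G → G
  one : G
  inv : G → G
  le : G → G → Prop
  mul_assoc : ∀ a b c, mul (mul a b) c = mul a (mul b c)
  one_mul : ∀ a, mul one a = a
  mul_one : ∀ a, mul a one = a
  inv_mul_cancel : ∀ a, mul (inv a) a = one
  mul_inv_cancel : ∀ a, mul a (inv a) = one
  le_refl : ∀ a, le a a
  le_trans : ∀ a b c, le a b → le b c → le a c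
  le_antisymm : ∀ a b, le a b → le b a → a = b
  le_total : ∀ a b, le a b ∨ le b a
  mul_le_mul_left : ∀ a b c, le a b → le (mul c a) (mul c b)
  mul_le_mul_right : ∀ a b c, le a b → le (mul a c) (mul b c)

/-- Strict order of a totally ordered group structure. -/
def TOGroupStr.lt {G : Type} (S : TOGroupStr G) (a b : G) : Prop := S.le a b ∧ a ≠ b

/-- A CCR is advantage-standard rationalizable if there are a totally ordered group and
advantage/standard functions such that strict social preference holds exactly when the
advantage exceeds the standard. -/
def ASRationalizable {V X : Type*} (f : CCR V X) : Prop :=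
  ∃ (G : Type) (S : TOGroupStr G)
    (Adv : X → X → (V → X → X → Prop) → G)
    (Std : X → X → (V → X → X → Prop) → G),
    (∀ (x y : X) (R : Profile V X),
        Adv x y (R.restrict x y) = S.inv (Adv y x (R.restrict x y))) ∧
    (∀ (x y : X) (R : Profile V X), S.le S.one (Std x y (R.remove x y))) ∧
    (∀ (x y : X) (R : Profile V X),
        strictPref (f R) x y ↔ S.lt (Std x y (R.remove x y)) (Adv x y (R.restrict x y)))
/-- Weak IIA: two profiles alike on {x,y} cannot have opposite strict social preferences. -/
def WeakIIA {V X : Type*} (f : CCR V X) : Prop :=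
  ∀ (x y : X) (R R' : Profile V X), R.restrict x y = R'.restrict x y →
    strictPref (f R) x y → ¬ strictPref (f R') y x
/-- The set of restricted {x,y}-profiles for which some extending profile yields a strict
social preference of x over y. -/
def PPlus {V X : Type*} (f : CCR V X) (x y : X) : Set (V → X → X → Prop) :=
  {Q | ∃ R : Profile V X, R.restrict x y = Q ∧ strictPref (f R) x y}

/-- Orderability of a CCR. -/
def Orderable {V X : Type*} (f : CCR V X) : Prop :=
  ∀ x y : X, ∃ lq : (V → X → X → Prop) → (V → X → X → Prop) → Prop,
    (∀ Q₁ ∈ PPlus f x y, ∀ Q₂ ∈ PPlus f x y, ∀ Q₃ ∈ PPlus f x y,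
        lq Q₁ Q₂ → lq Q₂ Q₃ → lq Q₁ Q₃) ∧
    (∀ Q₁ ∈ PPlus f x y, ∀ Q₂ ∈ PPlus f x y, lq Q₁ Q₂ ∨ lq Q₂ Q₁) ∧
    (∀ R₁ R₂ : Profile V X, lq (R₁.restrict x y) (R₂.restrict x y) →
        R₁.remove x y = R₂.remove x y →
        strictPref (f R₁) x y → strictPref (f R₂) x y)

/-!
The forward direction is direct: weak IIA holds because `Adv x y Q` and its inverse
`Adv y x Q` cannot both exceed the nonnegative standards, and the order
`Q₁ ≤ Q₂ ↔ Adv x y Q₁ ≤ Adv x y Q₂` witnesses orderability.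

For the converse, fix `x, y` and let `≤` be the total preorder on the finite set `P⁺(x,y)`.
The advantage of `Q ∈ P⁺(x,y)` is its rank `#{Q' ∈ P⁺(x,y) | Q' ≤ Q}`, extended
antisymmetrically to `P⁺(y,x)` (disjoint from `P⁺(x,y)` by weak IIA) and by `0` elsewhere.
For a profile `p` on the other pairs, the restrictions dominating one that wins together with
`p` form an upper set `U` of `P⁺(x,y)`, and orderability says that `Q ∈ P⁺(x,y)` wins together
with `p` exactly when `Q ∈ U`. In a finite total preorder, the rank of `Q` exceeds the size
of the complement of an upper set `U` exactly when `Q ∈ U`, so `#(P⁺(x,y) \ U)` serves as the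
standard.
-/

theorem Profile.restrict_comm {V X : Type*} (R : Profile V X) (x y : X) :
    R.restrict x y = R.restrict y x := by
  funext i a b
  simp only [Profile.restrict, or_comm]

namespace TOGroupStr

variable {G : Type} (S : TOGroupStr G) {a b c : G}

theorem lt_of_lt_of_le (hab : S.lt a b) (hbc : S.le b c) : S.lt a c :=
  ⟨S.le_trans _ _ _ hab.1 hbc, by
    rintro rfl
    exact hab.2 (S.le_antisymm _ _ hab.1 hbc)⟩

theorem lt_of_le_of_lt (hab : S.le a b) (hbc : S.lt b c) : S.lt a c :=
  ⟨S.le_trans _ _ _ hab hbc.1, by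
    rintro rfl
    exact hbc.2 (S.le_antisymm _ _ hbc.1 hab)⟩

theorem not_one_lt_of_one_le_inv (h : S.le S.one (S.inv a)) : ¬ S.lt S.one a := by
  rintro ⟨hle, hne⟩
  have hge : S.le a S.one := by
    simpa only [S.mul_one, S.mul_inv_cancel] using S.mul_le_mul_left _ _ a h
  exact hne (S.le_antisymm _ _ hle hge)

def ofAdd (G : Type) [AddGroup G] [LinearOrder G] [AddLeftMono G] [AddRightMono G] :
    TOGroupStr G where
  mul := (· + ·)
  one := 0
  inv := (- ·)
  le := (· ≤ ·)
  mul_assoc := add_assoc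
  one_mul := zero_add
  mul_one := add_zero
  inv_mul_cancel := neg_add_cancel
  mul_inv_cancel := add_neg_cancel
  le_refl := _root_.le_refl
  le_trans _ _ _ := _root_.le_trans
  le_antisymm _ _ := _root_.le_antisymm
  le_total := _root_.le_total
  mul_le_mul_left _ _ c h := add_le_add_right h c
  mul_le_mul_right _ _ c h := add_le_add_left h c

theorem ofAdd_lt {G : Type} [AddGroup G] [LinearOrder G] [AddLeftMono G] [AddRightMono G]
    (a b : G) : (ofAdd G).lt a b ↔ a < b :=
  lt_iff_le_and_ne.symm

end TOGroupStr

section Rank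

variable {α : Type*} {r : α → α → Prop} {s u : Set α}

noncomputable def rankIn (r : α → α → Prop) (s : Set α) (a : α) : ℕ :=
  {b | b ∈ s ∧ r b a}.ncard

theorem ncard_diff_lt_rankIn_iff (hs : s.Finite) (htotal : ∀ a ∈ s, ∀ b ∈ s, r a b ∨ r b a)
    (hupper : ∀ a ∈ s, ∀ b ∈ s, a ∈ u → r a b → b ∈ u) {a : α} (ha : a ∈ s) :
    (s \ u).ncard < rankIn r s a ↔ a ∈ u := by
  constructor
  · intro hlt
    by_contra hau
    have hsub : {b | b ∈ s ∧ r b a} ⊆ s \ u := fun b ⟨hb, hba⟩ =>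
      ⟨hb, fun hbu => hau (hupper b hb a ha hbu hba)⟩
    exact (Set.ncard_le_ncard hsub hs.sdiff).not_gt hlt
  · intro hau
    have hsub : insert a (s \ u) ⊆ {b | b ∈ s ∧ r b a} := by
      rintro b (rfl | ⟨hb, hbu⟩)
      · exact ⟨ha, (htotal b ha b ha).elim id id⟩
      · exact ⟨hb, (htotal b hb a ha).resolve_right fun hab => hbu (hupper a ha b hb hau hab)⟩
    calc (s \ u).ncard < (insert a (s \ u)).ncard := by
          rw [Set.ncard_insert_of_notMem (fun h => h.2 hau) hs.sdiff]
          exact Nat.lt_succ_self _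
      _ ≤ rankIn r s a := Set.ncard_le_ncard hsub (hs.subset fun _ hb => hb.1)

end Rank

section Characterization

variable {V X : Type*} {f : CCR V X}

theorem ASRationalizable.weakIIA (h : ASRationalizable f) : WeakIIA f := by
  obtain ⟨G, S, Adv, Std, hinv, hstd, hiff⟩ := h
  have one_lt_adv : ∀ x y R, strictPref (f R) x y → S.lt S.one (Adv x y (R.restrict x y)) :=
    fun x y R hR => S.lt_of_le_of_lt (hstd x y R) ((hiff x y R).1 hR)
  intro x y R R' hRR' hxy hyx
  have hyx' := one_lt_adv y x R' hyx
  rw [hinv, Profile.restrict_comm R' y x, ← hRR'] at hyx'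
  exact S.not_one_lt_of_one_le_inv hyx'.1 (one_lt_adv x y R hxy)

theorem ASRationalizable.orderable (h : ASRationalizable f) : Orderable f := by
  obtain ⟨G, S, Adv, Std, -, -, hiff⟩ := h
  intro x y
  refine ⟨fun Q₁ Q₂ => S.le (Adv x y Q₁) (Adv x y Q₂), fun _ _ _ _ _ _ => S.le_trans _ _ _,
    fun _ _ _ _ => S.le_total _ _, fun R₁ R₂ hle hrem h₁ => (hiff x y R₂).2 ?_⟩
  rw [← hrem]
  exact S.lt_of_lt_of_le ((hiff x y R₁).1 h₁) hle

theorem WeakIIA.notMem_PPlus_swap (hW : WeakIIA f) {x y : X} {Q : V → X → X → Prop}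
    (hQ : Q ∈ PPlus f x y) : Q ∉ PPlus f y x := by
  rintro ⟨R', hR', hyx⟩
  obtain ⟨R, hR, hxy⟩ := hQ
  exact hW x y R R' (by rw [hR, Profile.restrict_comm, hR']) hxy hyx

def winUpperSet (f : CCR V X) (r : (V → X → X → Prop) → (V → X → X → Prop) → Prop) (x y : X)
    (p : V → X → X → Prop) : Set (V → X → X → Prop) :=
  {Q | ∃ R : Profile V X, R.remove x y = p ∧ strictPref (f R) x y ∧ r (R.restrict x y) Q}

variable {r : (V → X → X → Prop) → (V → X → X → Prop) → Prop} {x y : X}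

theorem winUpperSet_upper
    (htrans : ∀ Q₁ ∈ PPlus f x y, ∀ Q₂ ∈ PPlus f x y, ∀ Q₃ ∈ PPlus f x y,
      r Q₁ Q₂ → r Q₂ Q₃ → r Q₁ Q₃)
    (p : V → X → X → Prop) :
    ∀ Q ∈ PPlus f x y, ∀ Q' ∈ PPlus f x y,
      Q ∈ winUpperSet f r x y p → r Q Q' → Q' ∈ winUpperSet f r x y p := by
  rintro Q hQ Q' hQ' ⟨R, hR, hxy, hRQ⟩ hQQ'
  exact ⟨R, hR, hxy, htrans _ ⟨R, rfl, hxy⟩ Q hQ Q' hQ' hRQ hQQ'⟩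

theorem strictPref_iff_restrict_mem_winUpperSet
    (htotal : ∀ Q₁ ∈ PPlus f x y, ∀ Q₂ ∈ PPlus f x y, r Q₁ Q₂ ∨ r Q₂ Q₁)
    (hmono : ∀ R₁ R₂ : Profile V X, r (R₁.restrict x y) (R₂.restrict x y) →
      R₁.remove x y = R₂.remove x y → strictPref (f R₁) x y → strictPref (f R₂) x y)
    (R : Profile V X) :
    strictPref (f R) x y ↔ R.restrict x y ∈ winUpperSet f r x y (R.remove x y) := by
  constructor
  · intro hxy
    have hQ : R.restrict x y ∈ PPlus f x y := ⟨R, rfl, hxy⟩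
    exact ⟨R, rfl, hxy, (htotal _ hQ _ hQ).elim id id⟩
  · rintro ⟨R₀, hR₀, hxy, hle⟩
    exact hmono R₀ R hle hR₀ hxy

noncomputable def rankAdvantage (f : CCR V X)
    (lq : X → X → (V → X → X → Prop) → (V → X → X → Prop) → Prop) (x y : X)
    (Q : V → X → X → Prop) : ℤ :=
  (PPlus f x y).indicator (fun Q => (rankIn (lq x y) (PPlus f x y) Q : ℤ)) Q -
    (PPlus f y x).indicator (fun Q => (rankIn (lq y x) (PPlus f y x) Q : ℤ)) Q

noncomputable def rankStandard (f : CCR V X)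
    (lq : X → X → (V → X → X → Prop) → (V → X → X → Prop) → Prop) (x y : X)
    (p : V → X → X → Prop) : ℤ :=
  (PPlus f x y \ winUpperSet f (lq x y) x y p).ncard

variable {lq : X → X → (V → X → X → Prop) → (V → X → X → Prop) → Prop}
  {Q : V → X → X → Prop}

theorem rankAdvantage_of_mem (hW : WeakIIA f) (hQ : Q ∈ PPlus f x y) :
    rankAdvantage f lq x y Q = rankIn (lq x y) (PPlus f x y) Q := by
  rw [rankAdvantage, Set.indicator_of_mem hQ, Set.indicator_of_notMem (hW.notMem_PPlus_swap hQ),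
    sub_zero]

theorem rankAdvantage_nonpos_of_notMem (hQ : Q ∉ PPlus f x y) : rankAdvantage f lq x y Q ≤ 0 := by
  rw [rankAdvantage, Set.indicator_of_notMem hQ, zero_sub, neg_nonpos]
  exact Set.indicator_nonneg (fun _ _ => Nat.cast_nonneg _) Q

theorem ASRationalizable.of_weakIIA_of_orderable [Finite V] [Finite X] (hW : WeakIIA f)
    (hO : Orderable f) : ASRationalizable f := by
  unfold Orderable at hO
  choose lq htrans htotal hmono using hO
  refine ⟨ℤ, TOGroupStr.ofAdd ℤ, rankAdvantage f lq, rankStandard f lq,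
    fun _ _ _ => (neg_sub _ _).symm, fun _ _ _ => Nat.cast_nonneg _, fun x y R => ?_⟩
  rw [TOGroupStr.ofAdd_lt]
  by_cases hQ : R.restrict x y ∈ PPlus f x y
  · rw [rankAdvantage_of_mem hW hQ, rankStandard, Nat.cast_lt,
      ncard_diff_lt_rankIn_iff (Set.toFinite _) (htotal x y) (winUpperSet_upper (htrans x y) _) hQ]
    exact strictPref_iff_restrict_mem_winUpperSet (htotal x y) (hmono x y) R
  · refine iff_of_false (fun hxy => hQ ⟨R, rfl, hxy⟩) (not_lt.2 ?_)
    exact (rankAdvantage_nonpos_of_notMem hQ).trans (Nat.cast_nonneg _)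

end Characterization

/-- Characterization: AS rationalizability is equivalent to weak IIA together with
orderability. -/
theorem as_rationalizable_iff_weakIIA_and_orderable {V X : Type*} [Finite V] [Finite X]
    (f : CCR V X) : ASRationalizable f ↔ WeakIIA f ∧ Orderable f :=
  ⟨fun h => ⟨h.weakIIA, h.orderable⟩, fun ⟨hW, hO⟩ => .of_weakIIA_of_orderable hW hO⟩
end

section
/- The Gillies Covering CCR is AS rationalizable with Advantage(x,y,R|_{x,y}) = Margin(x,y) computed from the restricted profile, and Standard(x,y,R^{-x,y}) = 0 if every v ∉ {x,y} with v ≻ x (in R^{-x,y}) also has v ≻ y, and |V| otherwise. -/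
/-- Majority preference: x is majority preferred to y. -/
noncomputable def majPref {V X : Type*} (R : Profile V X) (x y : X) : Prop :=
  0 < marginOf R.rel x y

/-- The strict Gillies covering relation. -/
noncomputable def Pcov {V X : Type*} (R : Profile V X) (x y : X) : Prop :=
  majPref R x y ∧ ∀ v, majPref R v x → majPref R v y

/-- Covering indifference: x and y relate by majority preference to all candidates alike. -/
noncomputable def Icov {V X : Type*} (R : Profile V X) (x y : X) : Prop :=
  ∀ v, (majPref R v x ↔ majPref R v y) ∧ (majPref R x v ↔ majPref R y v)

/-- The Gillies Covering CCR. -/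
noncomputable def fcov {V X : Type*} : CCR V X :=
  fun R x y => Pcov R x y ∨ Icov R x y

open scoped Classical in
/-- The standard function for the Gillies Covering CCR. -/
noncomputable def gilliesStd {V X : Type*} (x y : X) (T : V → X → X → Prop) : ℤ :=
  if ∀ v : X, v ≠ x → v ≠ y → 0 < marginOf T v x → 0 < marginOf T v y then 0
  else (Nat.card V : ℤ)


/-!
Majority preference is asymmetric and irreflexive, so covering indifference can never hold
together with `x ≻ y`; hence `x` is strictly chosen over `y` exactly when `x` covers `y`. Both
`x ≻ y` and the covering condition for third candidates are read off the two halves of the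
profile: the margin of `x` over `y` survives restriction to `{x, y}`, and margins `v` versus
`x` or `y` with `v ∉ {x, y}` survive removal of the pair. A standard of `0` then leaves exactly
`x ≻ y`, while a standard of `|V|` can never be beaten by a margin.
-/

section Margin

variable {V X : Type*}

lemma marginOf_congr {p q : V → X → X → Prop} {a b : X}
    (hab : ∀ i, strictPref (p i) a b ↔ strictPref (q i) a b)
    (hba : ∀ i, strictPref (p i) b a ↔ strictPref (q i) b a) :
    marginOf p a b = marginOf q a b := by
  simp only [marginOf, hab, hba]

lemma marginOf_swap (p : V → X → X → Prop) (a b : X) :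
    marginOf p b a = - marginOf p a b := by
  simp only [marginOf, neg_sub]

lemma marginOf_self (p : V → X → X → Prop) (a : X) : marginOf p a a = 0 :=
  sub_self _

lemma marginOf_le_card [Finite V] (p : V → X → X → Prop) (a b : X) :
    marginOf p a b ≤ Nat.card V := by
  have h := Nat.card_le_card_of_injective _
    (Subtype.val_injective (p := fun i => strictPref (p i) a b))
  unfold marginOf
  omega

lemma Profile.marginOf_restrict (R : Profile V X) (x y : X) :
    marginOf (R.restrict x y) x y = marginOf R.rel x y := by
  apply marginOf_congr <;> simp [strictPref, Profile.restrict]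

lemma Profile.marginOf_remove_of_ne (R : Profile V X) {x y v : X} (hx : v ≠ x) (hy : v ≠ y)
    (b : X) : marginOf (R.remove x y) v b = marginOf R.rel v b := by
  apply marginOf_congr <;> simp [strictPref, Profile.remove, hx, hy]

end Margin

section Covering

variable {V X : Type*} (R : Profile V X)

lemma majPref_irrefl (x : X) : ¬ majPref R x x := by
  simp [majPref, marginOf_self]

lemma majPref_asymm {x y : X} (h : majPref R x y) : ¬ majPref R y x := by
  unfold majPref at *
  rw [marginOf_swap]
  omega

lemma Icov.symm {R : Profile V X} {x y : X} (h : Icov R x y) : Icov R y x :=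
  fun v => ⟨(h v).1.symm, (h v).2.symm⟩

lemma not_Icov_of_majPref {x y : X} (h : majPref R x y) : ¬ Icov R x y :=
  fun hI => majPref_irrefl R y (((hI y).2).mp h)

lemma strictPref_fcov_iff (x y : X) : strictPref (fcov R) x y ↔ Pcov R x y := by
  constructor
  · rintro ⟨hP | hI, hyx⟩
    · exact hP
    · exact absurd (Or.inr hI.symm) hyx
  · intro hP
    refine ⟨Or.inl hP, ?_⟩
    rintro (hP' | hI)
    · exact majPref_asymm R hP.1 hP'.1
    · exact not_Icov_of_majPref R hP.1 hI.symm

/-- In `Pcov R x y` the candidates `v = x` and `v = y` are vacuous: neither beats `x` once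
`x ≻ y`. -/
lemma Pcov_iff_forall_ne (x y : X) :
    Pcov R x y ↔ majPref R x y ∧ ∀ v, v ≠ x → v ≠ y → majPref R v x → majPref R v y := by
  refine and_congr_right fun hxy => ⟨fun h v _ _ => h v, fun h v hvx => ?_⟩
  by_cases hx : v = x
  · exact absurd (hx ▸ hvx) (majPref_irrefl R x)
  by_cases hy : v = y
  · exact absurd (hy ▸ hvx) (majPref_asymm R hxy)
  exact h v hx hy hvx

lemma forall_ne_remove_iff (x y : X) :
    (∀ v, v ≠ x → v ≠ y → 0 < marginOf (R.remove x y) v x → 0 < marginOf (R.remove x y) v y) ↔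
      ∀ v, v ≠ x → v ≠ y → majPref R v x → majPref R v y := by
  refine forall_congr' fun v => forall_congr' fun hx => forall_congr' fun hy => ?_
  rw [R.marginOf_remove_of_ne hx hy, R.marginOf_remove_of_ne hx hy, majPref, majPref]

end Covering

lemma gilliesStd_nonneg {V X : Type*} (x y : X) (T : V → X → X → Prop) :
    0 ≤ gilliesStd x y T := by
  unfold gilliesStd
  split <;> positivity

theorem gillies_as_rationalizable_general {V X : Type*} [Finite V] :
    (∀ (x y : X) (R : Profile V X),
        marginOf (R.restrict x y) x y = - marginOf (R.restrict x y) y x) ∧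
    (∀ (x y : X) (R : Profile V X), 0 ≤ gilliesStd x y (R.remove x y)) ∧
    (∀ (x y : X) (R : Profile V X),
        strictPref (fcov R) x y ↔
          gilliesStd x y (R.remove x y) < marginOf (R.restrict x y) x y) := by
  refine ⟨fun x y R => marginOf_swap _ y x,
    fun x y R => gilliesStd_nonneg x y _, fun x y R => ?_⟩
  rw [strictPref_fcov_iff, Pcov_iff_forall_ne, R.marginOf_restrict, gilliesStd,
    forall_ne_remove_iff]
  split_ifs with hcov
  · exact and_iff_left hcov
  · simpa only [hcov, and_false, false_iff, not_lt] using marginOf_le_card R.rel x y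

/-- The Gillies Covering CCR is AS rationalizable over (ℤ,+,≤) with advantage the margin
computed from the restricted profile and the indicated standard function. -/
theorem gillies_as_rationalizable {V X : Type*} [Finite V] [Finite X] :
    (∀ (x y : X) (R : Profile V X),
        marginOf (R.restrict x y) x y = - marginOf (R.restrict x y) y x) ∧
    (∀ (x y : X) (R : Profile V X), 0 ≤ gilliesStd x y (R.remove x y)) ∧
    (∀ (x y : X) (R : Profile V X),
        strictPref (fcov R) x y ↔
          gilliesStd x y (R.remove x y) < marginOf (R.restrict x y) x y) :=
  gillies_as_rationalizable_general
end

section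
/- Let |X| ≥ 4 and V finite. If f is a transitive CCR satisfying PI-weak IIA and Pareto, and we assume: (i) every coalition almost weakly decisive on some pair is weakly decisive, and (ii) weakly decisive coalitions are closed under intersection, then letting C be the intersection of all weakly decisive coalitions, C is weakly decisive and every member of C is a vetoer. -/
/-- A coalition C is weakly decisive for f. -/
def WeaklyDecisive {V X : Type*} (f : CCR V X) (C : Set V) : Prop :=
  ∀ (R : Profile V X) (x y : X), (∀ i ∈ C, strictPref (R.rel i) x y) → f R x y

/-- A coalition C is almost weakly decisive on x,y for f. -/
def AlmostWeaklyDecisive {V X : Type*} (f : CCR V X) (C : Set V) (x y : X) : Prop :=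
  ∀ R : Profile V X, (∀ i ∈ C, strictPref (R.rel i) x y) →
    (∀ j ∉ C, strictPref (R.rel j) y x) → f R x y

/-- A vetoer for f. -/
def Vetoer {V X : Type*} (f : CCR V X) (i : V) : Prop :=
  ∀ (R : Profile V X) (x y : X), strictPref (R.rel i) x y → ¬ strictPref (f R) y x

/-- PI-weak IIA. -/
def PIWeakIIA {V X : Type*} (f : CCR V X) : Prop :=
  ∀ (x y : X) (R R' : Profile V X), R.restrict x y = R'.restrict x y →
    strictPref (f R) x y → strictPref (f R') x y ∨ (f R' x y ∧ f R' y x)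

/-!
Since `V` is finite, the weakly decisive coalitions form a filter on `V` (upward closed by
definition, containing `V` by Pareto, closed under `∩` by hypothesis), so its kernel `C` is
weakly decisive. If some `i ∈ C` were not a vetoer, say `x ≻ᵢ y` but `y ≻ x` socially, put a third
alternative `a` between `x` and `y` for `i` and on top for everyone else. PI-weak IIA keeps `y`
weakly above `x`, Pareto puts `a` strictly above `y`, so `a` is strictly above `x`; since only `i`
prefers `x` to `a`, PI-weak IIA makes `{i}ᶜ` almost weakly decisive on `(a, x)`, hence weakly
decisive, contradicting `i ∈ C`.
-/

section

variable {V X : Type*}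

lemma strictPref_of_strictPref_of_rel {R : X → X → Prop}
    (htrans : ∀ x y z, R x y → R y z → R x z) {x y z : X}
    (hxy : strictPref R x y) (hyz : R y z) : strictPref R x z :=
  ⟨htrans x y z hxy.1 hyz, fun hzx => hxy.2 (htrans y z x hyz hzx)⟩

namespace Profile

def ofRank (r : V → X → ℤ) : Profile V X where
  rel i u v := r i v ≤ r i u
  total i u v := le_total (r i v) (r i u)
  trans _ _ _ _ h₁ h₂ := h₂.trans h₁

lemma strictPref_ofRank (r : V → X → ℤ) (i : V) (u v : X) :
    strictPref ((ofRank r).rel i) u v ↔ r i v < r i u :=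
  lt_iff_le_not_ge.symm

lemma rel_iff_not_strictPref (R : Profile V X) (i : V) (u v : X) :
    R.rel i u v ↔ ¬ strictPref (R.rel i) v u := by
  have := R.total i u v
  unfold strictPref
  tauto

lemma restrict_comm_s14 (R : Profile V X) (x y : X) : R.restrict y x = R.restrict x y := by
  funext i a b
  simp only [restrict, or_comm]

lemma restrict_eq_of_rel_iff {R R' : Profile V X} {x y : X}
    (h : ∀ j, (R.rel j x y ↔ R'.rel j x y) ∧ (R.rel j y x ↔ R'.rel j y x)) :
    R.restrict x y = R'.restrict x y := by
  funext j a b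
  refine propext (and_congr_right fun ha => and_congr_right fun hb => ?_)
  rcases ha with rfl | rfl <;> rcases hb with rfl | rfl
  · exact ⟨fun _ => (R'.total j _ _).elim id id, fun _ => (R.total j _ _).elim id id⟩
  · exact (h j).1
  · exact (h j).2
  · exact ⟨fun _ => (R'.total j _ _).elim id id, fun _ => (R.total j _ _).elim id id⟩

lemma restrict_eq_of_strictPref_iff {R R' : Profile V X} {x y : X}
    (h : ∀ j, (strictPref (R.rel j) x y ↔ strictPref (R'.rel j) x y) ∧
      (strictPref (R.rel j) y x ↔ strictPref (R'.rel j) y x)) :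
    R.restrict x y = R'.restrict x y :=
  restrict_eq_of_rel_iff fun j => by
    simp only [rel_iff_not_strictPref R j, rel_iff_not_strictPref R' j, (h j).1, (h j).2,
      and_self]

lemma exists_between_and_above (R : Profile V X) {i : V} {x y a : X}
    (hxy : strictPref (R.rel i) x y) (hax : a ≠ x) (hay : a ≠ y) :
    ∃ R' : Profile V X, R.restrict x y = R'.restrict x y ∧
      strictPref (R'.rel i) x a ∧ strictPref (R'.rel i) a y ∧
      ∀ j ≠ i, strictPref (R'.rel j) a x ∧ strictPref (R'.rel j) a y := by
  classical
  have hyx : y ≠ x := fun h => hxy.2 (h ▸ hxy.1)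
  let r : V → X → ℤ := fun j u =>
    if u = a then (if j = i then 3 else 5)
    else if u = x then (if R.rel j x y then 4 else 2)
    else if u = y then (if R.rel j y x then 4 else 2) else 0
  have hra : ∀ j, r j a = if j = i then 3 else 5 := fun j => if_pos rfl
  have hrx : ∀ j, r j x = if R.rel j x y then 4 else 2 := fun j => by simp [r, hax.symm]
  have hry : ∀ j, r j y = if R.rel j y x then 4 else 2 := fun j => by simp [r, hay.symm, hyx]
  refine ⟨ofRank r, restrict_eq_of_rel_iff fun j => ?_, ?_, ?_, fun j hj => ?_⟩
  · have := R.total j x y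
    simp only [ofRank, hrx, hry]
    constructor <;> split_ifs <;> simp_all
  · simp [strictPref_ofRank, hra, hrx, hxy.1]
  · simp [strictPref_ofRank, hra, hry, hxy.2]
  · simp only [strictPref_ofRank, hra, hrx, hry, hj, if_false]
    constructor <;> split_ifs <;> norm_num

end Profile

lemma PIWeakIIA.rel_of_restrict_eq {f : CCR V X} (hf : PIWeakIIA f) {R R' : Profile V X}
    {x y : X} (hR : R.restrict x y = R'.restrict x y) (hxy : strictPref (f R) x y) :
    f R' x y :=
  (hf x y R R' hR hxy).elim And.left And.left

lemma PIWeakIIA.almostWeaklyDecisive {f : CCR V X} (hf : PIWeakIIA f) {C : Set V}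
    {R : Profile V X} {x y : X} (hC : ∀ i ∈ C, strictPref (R.rel i) x y)
    (hCc : ∀ j ∉ C, strictPref (R.rel j) y x) (hxy : strictPref (f R) x y) :
    AlmostWeaklyDecisive f C x y := fun Q hQC hQCc =>
  hf.rel_of_restrict_eq (Profile.restrict_eq_of_strictPref_iff fun j => by
    by_cases hj : j ∈ C
    · have := hC j hj; have := hQC j hj; unfold strictPref at *; tauto
    · have := hCc j hj; have := hQCc j hj; unfold strictPref at *; tauto) hxy

lemma WeaklyDecisive.mono {f : CCR V X} {C D : Set V} (hC : WeaklyDecisive f C) (hCD : C ⊆ D) :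
    WeaklyDecisive f D :=
  fun R x y hD => hC R x y fun i hi => hD i (hCD hi)

lemma weaklyDecisive_univ {f : CCR V X}
    (hPareto : ∀ (R : Profile V X) (x y : X),
      (∀ i, strictPref (R.rel i) x y) → strictPref (f R) x y) :
    WeaklyDecisive f Set.univ :=
  fun R x y h => (hPareto R x y fun i => h i trivial).1

def decisiveFilter (f : CCR V X) (huniv : WeaklyDecisive f Set.univ)
    (hinter : ∀ C C' : Set V, WeaklyDecisive f C → WeaklyDecisive f C' →
      WeaklyDecisive f (C ∩ C')) : Filter V where
  sets := {C | WeaklyDecisive f C}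
  univ_sets := huniv
  sets_of_superset hC hCD := hC.mono hCD
  inter_sets := hinter _ _

lemma weaklyDecisive_ker [Finite V] {f : CCR V X} (huniv : WeaklyDecisive f Set.univ)
    (hinter : ∀ C C' : Set V, WeaklyDecisive f C → WeaklyDecisive f C' →
      WeaklyDecisive f (C ∩ C')) :
    WeaklyDecisive f {i | ∀ C : Set V, WeaklyDecisive f C → i ∈ C} :=
  (Filter.sInter_mem (f := decisiveFilter f huniv hinter) (Set.toFinite _)).2 fun _ h => h

lemma vetoer_of_not_weaklyDecisive_compl {f : CCR V X} (hX : 3 ≤ ENat.card X)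
    (htrans : ∀ (R : Profile V X) (x y z : X), f R x y → f R y z → f R x z)
    (hPI : PIWeakIIA f)
    (hPareto : ∀ (R : Profile V X) (x y : X),
      (∀ i, strictPref (R.rel i) x y) → strictPref (f R) x y)
    (hAWD : ∀ (C : Set V) (x y : X), x ≠ y → AlmostWeaklyDecisive f C x y →
      WeaklyDecisive f C)
    {i : V} (hi : ¬ WeaklyDecisive f {i}ᶜ) : Vetoer f i := by
  intro R x y hxy hyx
  obtain ⟨a, hax, hay⟩ := ENat.exists_ne_ne_of_three_le hX x y
  obtain ⟨R', hRR', hxa, hay', hothers⟩ := R.exists_between_and_above hxy hax hay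
  have hfyx : f R' y x := by
    refine hPI.rel_of_restrict_eq ?_ hyx
    rwa [R.restrict_comm_s14, R'.restrict_comm_s14]
  have hfay : strictPref (f R') a y :=
    hPareto R' a y fun j => (eq_or_ne j i).elim (fun hj => hj ▸ hay') fun hj => (hothers j hj).2
  have hfax : strictPref (f R') a x := strictPref_of_strictPref_of_rel (htrans R') hfay hfyx
  have hcompl : AlmostWeaklyDecisive f {i}ᶜ a x := by
    refine hPI.almostWeaklyDecisive (fun j hj => (hothers j hj).1) (fun j hj => ?_) hfax
    rw [Set.notMem_compl_iff, Set.mem_singleton_iff] at hj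
    exact hj ▸ hxa
  exact hi (hAWD _ a x hax hcompl)

end

theorem oligarchy_PI_weakIIA_general {V X : Type*} [Finite V]
    (h4 : 4 ≤ Nat.card X) (f : CCR V X)
    (htrans : ∀ (R : Profile V X) (x y z : X), f R x y → f R y z → f R x z)
    (hPI : PIWeakIIA f)
    (hPareto : ∀ (R : Profile V X) (x y : X),
      (∀ i, strictPref (R.rel i) x y) → strictPref (f R) x y)
    (hAWD : ∀ (C : Set V) (x y : X), x ≠ y → AlmostWeaklyDecisive f C x y →
      WeaklyDecisive f C)
    (hInter : ∀ C C' : Set V, WeaklyDecisive f C → WeaklyDecisive f C' →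
      WeaklyDecisive f (C ∩ C')) :
    WeaklyDecisive f {i | ∀ C : Set V, WeaklyDecisive f C → i ∈ C} ∧
    ∀ i ∈ {i | ∀ C : Set V, WeaklyDecisive f C → i ∈ C}, Vetoer f i := by
  have : Finite X := Nat.finite_of_card_ne_zero (by omega)
  have hX : 3 ≤ ENat.card X := by
    rw [ENat.card_eq_coe_natCard]
    exact_mod_cast (by omega : 3 ≤ Nat.card X)
  refine ⟨weaklyDecisive_ker (weaklyDecisive_univ hPareto) hInter, fun i hi => ?_⟩
  exact vetoer_of_not_weaklyDecisive_compl hX htrans hPI hPareto hAWD fun h => hi _ h rfl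

/-- Oligarchy under PI-weak IIA: given the decisiveness lemmas, the intersection of all
weakly decisive coalitions is weakly decisive and each of its members is a vetoer. -/
theorem oligarchy_PI_weakIIA {V X : Type*} [Finite V] [Finite X]
    (h4 : 4 ≤ Nat.card X) (f : CCR V X)
    (htrans : ∀ (R : Profile V X) (x y z : X), f R x y → f R y z → f R x z)
    (hPI : PIWeakIIA f)
    (hPareto : ∀ (R : Profile V X) (x y : X),
      (∀ i, strictPref (R.rel i) x y) → strictPref (f R) x y)
    (hAWD : ∀ (C : Set V) (x y : X), x ≠ y → AlmostWeaklyDecisive f C x y →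
      WeaklyDecisive f C)
    (hInter : ∀ C C' : Set V, WeaklyDecisive f C → WeaklyDecisive f C' →
      WeaklyDecisive f (C ∩ C')) :
    WeaklyDecisive f {i | ∀ C : Set V, WeaklyDecisive f C → i ∈ C} ∧
    ∀ i ∈ {i | ∀ C : Set V, WeaklyDecisive f C → i ∈ C}, Vetoer f i :=
  oligarchy_PI_weakIIA_general h4 f htrans hPI hPareto hAWD hInter
end
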